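/- Let F(z) = exp(-(1+z)/(1-z)) on 𝔻 and for α ∈ 𝔻 let τ_α(z) = (z+α)/(1+ᾱz). If α ∈ 𝔻, α ≠ 0, then f = τ_α ∘ F and g(z) = f(-z) are both holomorphic self-maps of 𝔻 with no critical points in 𝔻 (f' and g' never vanish), yet there is no conformal automorphism T of 𝔻 with f = T ∘ g. -/

import Mathlib

/-!
Write `F = exp ∘ (-C)` with the Cayley transform `C(z) = (1 + z)/(1 - z)`, which maps `𝔻` into the
right half-plane; hence `|F| < 1` on `𝔻`, and `f = τ_α ∘ F` and `g = f ∘ (-·)` are compositions of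
maps with nonvanishing derivatives. Since `exp` is `2πi`-periodic and `C(-z₀) = 1 - 2πi` for
`z₀ = πi/(1 - πi)`, we get `F(-z₀) = F(0)`, i.e. `g(z₀) = g(0)`. But `C(z₀) = 1/(1 - 2πi)` has real
part `≠ 1 = Re C(0)`, so `|F(z₀)| ≠ |F(0)|` and, `τ_α` being injective on `𝔻`, `f(z₀) ≠ f(0)`.
So `f` is not a function of `g` on `𝔻` at all, let alone `T ∘ g` for an automorphism `T`.
-/

open Complex

/-- `T` is a conformal automorphism of the unit disk: a holomorphic bijection of `𝔻`
with holomorphic inverse. -/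
def IsDiskAutomorphism (T : ℂ → ℂ) : Prop :=
  DifferentiableOn ℂ T (Metric.ball (0:ℂ) 1) ∧
  Set.MapsTo T (Metric.ball (0:ℂ) 1) (Metric.ball (0:ℂ) 1) ∧
  ∃ S : ℂ → ℂ, DifferentiableOn ℂ S (Metric.ball (0:ℂ) 1) ∧
    Set.MapsTo S (Metric.ball (0:ℂ) 1) (Metric.ball (0:ℂ) 1) ∧
    (∀ z ∈ Metric.ball (0:ℂ) 1, S (T z) = z) ∧
    (∀ z ∈ Metric.ball (0:ℂ) 1, T (S z) = z)

open ComplexConjugate Metric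

noncomputable def singularInner (z : ℂ) : ℂ := exp (-(1 + z) / (1 - z))

noncomputable def diskMobius (a w : ℂ) : ℂ := (w + a) / (1 + conj a * w)

lemma normSq_lt_one_of_norm_lt_one {z : ℂ} (hz : ‖z‖ < 1) : normSq z < 1 := by
  rw [normSq_eq_norm_sq]
  exact pow_lt_one₀ (norm_nonneg z) hz two_ne_zero

lemma one_sub_ne_zero_of_norm_lt_one {z : ℂ} (hz : ‖z‖ < 1) : 1 - z ≠ 0 :=
  sub_ne_zero.2 fun h => by simp [← h] at hz

lemma re_one_add_div_one_sub_pos {z : ℂ} (hz : ‖z‖ < 1) : 0 < ((1 + z) / (1 - z)).re := by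
  have hnum : (1 + z).re * (1 - z).re + (1 + z).im * (1 - z).im = 1 - normSq z := by
    simp only [add_re, sub_re, add_im, sub_im, one_re, one_im, normSq_apply]
    ring
  rw [div_re, ← add_div, hnum]
  exact div_pos (sub_pos.2 (normSq_lt_one_of_norm_lt_one hz))
    (normSq_pos.2 (one_sub_ne_zero_of_norm_lt_one hz))

lemma norm_singularInner (z : ℂ) :
    ‖singularInner z‖ = Real.exp (-((1 + z) / (1 - z)).re) := by
  rw [singularInner, norm_exp, neg_div, neg_re]

lemma norm_singularInner_lt_one {z : ℂ} (hz : ‖z‖ < 1) : ‖singularInner z‖ < 1 := by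
  rw [norm_singularInner, Real.exp_lt_one_iff, neg_lt_zero]
  exact re_one_add_div_one_sub_pos hz

lemma mapsTo_singularInner : Set.MapsTo singularInner (ball 0 1) (ball 0 1) := fun z hz => by
  rw [mem_ball_zero_iff] at hz ⊢
  exact norm_singularInner_lt_one hz

lemma hasDerivAt_singularInner {z : ℂ} (hz : 1 - z ≠ 0) :
    HasDerivAt singularInner (singularInner z * (-2 / (1 - z) ^ 2)) z := by
  have hexponent : HasDerivAt (fun z => -(1 + z) / (1 - z)) (-2 / (1 - z) ^ 2) z := by
    refine (((hasDerivAt_id' z).const_add 1).fun_neg.fun_div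
      ((hasDerivAt_id' z).const_sub 1) hz).congr_deriv ?_
    ring
  exact hexponent.cexp

lemma one_add_conj_mul_ne_zero {a w : ℂ} (ha : ‖a‖ < 1) (hw : ‖w‖ ≤ 1) :
    1 + conj a * w ≠ 0 := by
  intro h
  have hnorm : ‖conj a * w‖ = 1 := by rw [eq_neg_of_add_eq_zero_right h, norm_neg, norm_one]
  rw [norm_mul, RCLike.norm_conj] at hnorm
  nlinarith [norm_nonneg a, norm_nonneg w]

lemma normSq_one_add_conj_mul_sub_normSq_add (a w : ℂ) :
    normSq (1 + conj a * w) - normSq (w + a) = (1 - normSq a) * (1 - normSq w) := by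
  simp only [normSq_apply, add_re, add_im, mul_re, mul_im, conj_re, conj_im, one_re, one_im]
  ring

lemma mapsTo_diskMobius {a : ℂ} (ha : ‖a‖ < 1) :
    Set.MapsTo (diskMobius a) (ball 0 1) (ball 0 1) := by
  intro w hw
  rw [mem_ball_zero_iff] at hw ⊢
  have hden := one_add_conj_mul_ne_zero ha hw.le
  rw [diskMobius, norm_div, div_lt_one (norm_pos_iff.2 hden),
    ← sq_lt_sq₀ (norm_nonneg _) (norm_nonneg _), ← normSq_eq_norm_sq, ← normSq_eq_norm_sq]
  nlinarith [normSq_one_add_conj_mul_sub_normSq_add a w, normSq_lt_one_of_norm_lt_one ha,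
    normSq_lt_one_of_norm_lt_one hw]

lemma one_sub_conj_mul_self_ne_zero {a : ℂ} (ha : ‖a‖ < 1) : 1 - conj a * a ≠ 0 := by
  simpa [sub_eq_add_neg] using one_add_conj_mul_ne_zero ha (w := -a) (by simpa using ha.le)

lemma diskMobius_injOn {a : ℂ} (ha : ‖a‖ < 1) : Set.InjOn (diskMobius a) (ball 0 1) := by
  intro w₁ hw₁ w₂ hw₂ h
  rw [mem_ball_zero_iff] at hw₁ hw₂
  rw [diskMobius, diskMobius, div_eq_div_iff (one_add_conj_mul_ne_zero ha hw₁.le)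
    (one_add_conj_mul_ne_zero ha hw₂.le)] at h
  have hprod : (w₁ - w₂) * (1 - conj a * a) = 0 := by linear_combination h
  exact sub_eq_zero.1 ((mul_eq_zero.1 hprod).resolve_right (one_sub_conj_mul_self_ne_zero ha))

lemma hasDerivAt_diskMobius {a w : ℂ} (hw : 1 + conj a * w ≠ 0) :
    HasDerivAt (diskMobius a) ((1 - conj a * a) / (1 + conj a * w) ^ 2) w := by
  refine (((hasDerivAt_id' w).add_const a).fun_div
    (((hasDerivAt_id' w).const_mul (conj a)).const_add 1) hw).congr_deriv ?_
  ring

lemma hasDerivAt_diskMobius_comp_singularInner {a z : ℂ} (ha : ‖a‖ < 1) (hz : ‖z‖ < 1) :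
    HasDerivAt (diskMobius a ∘ singularInner)
      ((1 - conj a * a) / (1 + conj a * singularInner z) ^ 2 *
        (singularInner z * (-2 / (1 - z) ^ 2))) z :=
  (hasDerivAt_diskMobius (one_add_conj_mul_ne_zero ha (norm_singularInner_lt_one hz).le)).comp z
    (hasDerivAt_singularInner (one_sub_ne_zero_of_norm_lt_one hz))

lemma deriv_diskMobius_comp_singularInner_ne_zero {a z : ℂ} (ha : ‖a‖ < 1) (hz : ‖z‖ < 1) :
    deriv (diskMobius a ∘ singularInner) z ≠ 0 := by
  rw [(hasDerivAt_diskMobius_comp_singularInner ha hz).deriv]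
  have hden := one_add_conj_mul_ne_zero ha (norm_singularInner_lt_one hz).le
  have hz' := one_sub_ne_zero_of_norm_lt_one hz
  exact mul_ne_zero (div_ne_zero (one_sub_conj_mul_self_ne_zero ha) (pow_ne_zero 2 hden))
    (mul_ne_zero (exp_ne_zero _) (div_ne_zero (by norm_num) (pow_ne_zero 2 hz')))

lemma exists_singularInner_neg_eq_and_ne :
    ∃ z₀ ∈ ball (0 : ℂ) 1,
      singularInner (-z₀) = singularInner 0 ∧ singularInner z₀ ≠ singularInner 0 := by
  set c : ℂ := Real.pi * I
  have hc : 1 - c ≠ 0 := fun h => by simpa [c] using congrArg re h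
  have h2c : 1 - 2 * c ≠ 0 := fun h => by simpa [c] using congrArg re h
  refine ⟨c / (1 - c), ?_, ?_, ?_⟩
  · rw [mem_ball_zero_iff, norm_div, div_lt_one (norm_pos_iff.2 hc),
      ← sq_lt_sq₀ (norm_nonneg _) (norm_nonneg _), ← normSq_eq_norm_sq, ← normSq_eq_norm_sq]
    simp [c, normSq_apply]
  · have hexponent : -(1 + -(c / (1 - c))) / (1 - -(c / (1 - c))) = -1 + 2 * Real.pi * I := by
      field_simp
      ring
    rw [singularInner, singularInner, hexponent, exp_add, exp_two_pi_mul_I]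
    simp
  · have hcayley : (1 + c / (1 - c)) / (1 - c / (1 - c)) = (1 - 2 * c)⁻¹ := by
      field_simp
      ring
    intro h
    have := congrArg norm h
    rw [norm_singularInner, norm_singularInner, Real.exp_eq_exp, hcayley] at this
    simp [c, inv_re, normSq_apply] at this

theorem blaschke_not_determined_by_critical_points
    (α : ℂ) (hα : α ∈ Metric.ball (0:ℂ) 1)
    (F τ f g : ℂ → ℂ)
    (hF : ∀ z, F z = Complex.exp (-(1 + z) / (1 - z)))
    (hτ : ∀ z, τ z = (z + α) / (1 + (starRingEnd ℂ) α * z))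
    (hf : ∀ z, f z = τ (F z))
    (hg : ∀ z, g z = f (-z)) :
    DifferentiableOn ℂ f (Metric.ball (0:ℂ) 1) ∧
    Set.MapsTo f (Metric.ball (0:ℂ) 1) (Metric.ball (0:ℂ) 1) ∧
    (∀ z ∈ Metric.ball (0:ℂ) 1, deriv f z ≠ 0) ∧
    DifferentiableOn ℂ g (Metric.ball (0:ℂ) 1) ∧
    Set.MapsTo g (Metric.ball (0:ℂ) 1) (Metric.ball (0:ℂ) 1) ∧
    (∀ z ∈ Metric.ball (0:ℂ) 1, deriv g z ≠ 0) ∧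
    ¬ ∃ T : ℂ → ℂ, IsDiskAutomorphism T ∧
        ∀ z ∈ Metric.ball (0:ℂ) 1, f z = T (g z) := by
  rw [mem_ball_zero_iff] at hα
  obtain rfl : f = diskMobius α ∘ singularInner := funext fun z => by
    rw [hf, hτ, hF, Function.comp_apply, diskMobius, singularInner]
  obtain rfl : g = fun z => (diskMobius α ∘ singularInner) (-z) := funext hg
  have hdiff (z) (hz : z ∈ ball (0 : ℂ) 1) : DifferentiableAt ℂ (diskMobius α ∘ singularInner) z :=
    (hasDerivAt_diskMobius_comp_singularInner hα (mem_ball_zero_iff.1 hz)).differentiableAt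
  have hderiv (z) (hz : z ∈ ball (0 : ℂ) 1) : deriv (diskMobius α ∘ singularInner) z ≠ 0 :=
    deriv_diskMobius_comp_singularInner_ne_zero hα (mem_ball_zero_iff.1 hz)
  have hmaps := (mapsTo_diskMobius hα).comp mapsTo_singularInner
  have hneg : Set.MapsTo (fun z : ℂ => -z) (ball 0 1) (ball 0 1) := fun z hz => by
    simpa using hz
  refine ⟨fun z hz => (hdiff z hz).differentiableWithinAt, hmaps, hderiv,
    fun z hz => (differentiableAt_comp_neg.2 (hdiff _ (hneg hz))).differentiableWithinAt,
    hmaps.comp hneg, fun z hz => ?_, ?_⟩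
  · rw [deriv_comp_neg (f := diskMobius α ∘ singularInner)]
    exact neg_ne_zero.2 (hderiv _ (hneg hz))
  · rintro ⟨T, -, hT⟩
    obtain ⟨z₀, hz₀, hfibre, hne⟩ := exists_singularInner_neg_eq_and_ne
    have h0 : (0 : ℂ) ∈ ball (0 : ℂ) 1 := mem_ball_self one_pos
    refine hne (diskMobius_injOn hα (mapsTo_singularInner hz₀) (mapsTo_singularInner h0) ?_)
    calc diskMobius α (singularInner z₀) = T (diskMobius α (singularInner (-z₀))) := hT z₀ hz₀
      _ = T (diskMobius α (singularInner (-0))) := by rw [hfibre, neg_zero]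
      _ = diskMobius α (singularInner 0) := (hT 0 h0).symm
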